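/- Let (V,A) be a near-vector space and v ∈ Q(V)\{0}. Then the following are equivalent: (1) +_v = +_{θv} for all θ ∈ A\{0}; (2) the right distributive law (α +_v β)·θ = (α·θ) +_v (β·θ) holds for all α, β ∈ A and θ ∈ A (i.e., (A, +_v, ·) is right distributive, hence a division ring). -/
import Mathlib


/-- The quasi-kernel `Q(V)` of the pair `(V, A)`. -/
def Qset {V : Type*} [AddCommGroup V] (A : Set (V → V)) : Set V :=
  {x | ∀ α ∈ A, ∀ β ∈ A, ∃ γ ∈ A, α x + β x = γ x}

/-- `(V, A)` is a (non-trivial) near-vector space in the sense of André. -/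
structure IsNVS {V : Type*} [AddCommGroup V] (A : Set (V → V)) : Prop where
  nontriv : ∃ x : V, x ≠ 0
  zero_mem : (0 : V → V) ∈ A
  id_mem : (id : V → V) ∈ A
  neg_mem : (fun x : V => -x) ∈ A
  endo : ∀ α ∈ A, ∀ x y : V, α (x + y) = α x + α y
  bij : ∀ α ∈ A, α ≠ 0 → Function.Bijective α
  comp_mem : ∀ α ∈ A, ∀ β ∈ A, α ≠ 0 → β ≠ 0 → α ∘ β ∈ A
  inv_mem : ∀ α ∈ A, α ≠ 0 → ∃ β ∈ A, β ≠ 0 ∧ α ∘ β = id ∧ β ∘ α = id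
  fpf : ∀ α ∈ A, ∀ β ∈ A, ∀ x : V, α x = β x → α = β ∨ x = 0
  gen : AddSubgroup.closure (Qset A) = (⊤ : AddSubgroup V)

open Classical in
/-- The addition `+_v` induced on `A` by a (nonzero quasi-kernel) element `v`:
`α +_v β` is the unique `γ` with `γ v = α v + β v`. -/
noncomputable def nvAdd {V : Type*} [AddCommGroup V] (A : Set (V → V)) (v : V)
    (α β : V → V) : V → V :=
  if h : ∃ γ ∈ A, γ v = α v + β v then h.choose else 0

section aux

variable {V : Type*} [AddCommGroup V] {A : Set (V → V)}

lemma nvs_map_zero (h : IsNVS A) {α : V → V} (hα : α ∈ A) : α 0 = 0 := by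
  have h2 : α 0 = α 0 + α 0 := by simpa using h.endo α hα 0 0
  exact (left_eq_add.mp h2)

lemma nvs_comp_zero (h : IsNVS A) {α : V → V} (hα : α ∈ A) :
    α ∘ (0 : V → V) = (0 : V → V) := by
  funext x
  simp [Function.comp, nvs_map_zero h hα]

lemma nvs_comp_mem (h : IsNVS A) {α θ : V → V} (hα : α ∈ A) (hθ : θ ∈ A) :
    α ∘ θ ∈ A := by
  by_cases hα0 : α = 0
  · have : α ∘ θ = (0 : V → V) := by subst hα0; rfl
    rw [this]; exact h.zero_mem
  by_cases hθ0 : θ = 0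
  · rw [hθ0, nvs_comp_zero h hα]; exact h.zero_mem
  · exact h.comp_mem α hα θ hθ hα0 hθ0

lemma nvAdd_spec {v : V} (hv : v ∈ Qset A) {α β : V → V} (hα : α ∈ A) (hβ : β ∈ A) :
    nvAdd A v α β ∈ A ∧ nvAdd A v α β v = α v + β v := by
  obtain ⟨γ, hγ, he⟩ := hv α hα β hβ
  have hex : ∃ γ ∈ A, γ v = α v + β v := ⟨γ, hγ, he.symm⟩
  rw [nvAdd, dif_pos hex]
  obtain ⟨h1, h2⟩ := hex.choose_spec
  exact ⟨h1, h2⟩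

lemma nvAdd_unique (h : IsNVS A) {v : V} (hv : v ∈ Qset A) (hv0 : v ≠ 0)
    {α β γ : V → V} (hα : α ∈ A) (hβ : β ∈ A) (hγ : γ ∈ A)
    (he : γ v = α v + β v) : nvAdd A v α β = γ := by
  have hs := nvAdd_spec hv hα hβ
  rcases h.fpf _ hs.1 _ hγ v (hs.2.trans he.symm) with h1 | h2
  · exact h1
  · exact absurd h2 hv0

lemma nvs_Q_smul (h : IsNVS A) {v : V} (hv : v ∈ Qset A) {θ : V → V}
    (hθ : θ ∈ A) (hθ0 : θ ≠ 0) : θ v ∈ Qset A := by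
  intro α hα β hβ
  by_cases hα0 : α = 0
  · exact ⟨β, hβ, by simp [hα0]⟩
  by_cases hβ0 : β = 0
  · exact ⟨α, hα, by simp [hβ0]⟩
  obtain ⟨δ, hδ, he⟩ := hv (α ∘ θ) (nvs_comp_mem h hα hθ) (β ∘ θ) (nvs_comp_mem h hβ hθ)
  by_cases hδ0 : δ = 0
  · refine ⟨0, h.zero_mem, ?_⟩
    subst hδ0
    simpa [Function.comp] using he
  · obtain ⟨θ', hθ', hθ'0, _, hid2⟩ := h.inv_mem θ hθ hθ0
    refine ⟨δ ∘ θ', h.comp_mem δ hδ θ' hθ' hδ0 hθ'0, ?_⟩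
    have hvv : θ' (θ v) = v := congrFun hid2 v
    simpa [Function.comp, hvv] using he

lemma nvs_smul_ne_zero (h : IsNVS A) {v : V} (hv0 : v ≠ 0) {θ : V → V}
    (hθ : θ ∈ A) (hθ0 : θ ≠ 0) : θ v ≠ 0 := by
  intro h0
  exact hv0 ((h.bij θ hθ hθ0).1 (h0.trans (nvs_map_zero h hθ).symm))

end aux

/-- For a nonzero `v ∈ Q(V)`: `+_v = +_{θv}` for all nonzero `θ ∈ A` if and only if
the right distributive law `(α +_v β) ∘ θ = (α ∘ θ) +_v (β ∘ θ)` holds, i.e.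
`(A, +_v, ∘)` is a division ring. -/
theorem stmt9 {V : Type*} [AddCommGroup V] (A : Set (V → V)) (h : IsNVS A)
    (v : V) (hvQ : v ∈ Qset A) (hv0 : v ≠ 0) :
    (∀ θ ∈ A, θ ≠ 0 → ∀ α ∈ A, ∀ β ∈ A, nvAdd A v α β = nvAdd A (θ v) α β) ↔
    (∀ α ∈ A, ∀ β ∈ A, ∀ θ ∈ A,
      nvAdd A v α β ∘ θ = nvAdd A v (α ∘ θ) (β ∘ θ)) := by
  constructor
  · intro H α hα β hβ θ hθ
    by_cases hθ0 : θ = 0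
    · subst hθ0
      rw [nvs_comp_zero h hα, nvs_comp_zero h hβ,
        nvs_comp_zero h (nvAdd_spec hvQ hα hβ).1]
      symm
      exact nvAdd_unique h hvQ hv0 h.zero_mem h.zero_mem h.zero_mem (by simp)
    · have hθvQ : θ v ∈ Qset A := nvs_Q_smul h hvQ hθ hθ0
      have hs := nvAdd_spec hθvQ hα hβ
      have key := H θ hθ hθ0 α hα β hβ
      symm
      apply nvAdd_unique h hvQ hv0 (nvs_comp_mem h hα hθ) (nvs_comp_mem h hβ hθ)
        (nvs_comp_mem h (nvAdd_spec hvQ hα hβ).1 hθ)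
      show nvAdd A v α β (θ v) = (α ∘ θ) v + (β ∘ θ) v
      rw [key]
      exact hs.2
  · intro H θ hθ hθ0 α hα β hβ
    have hθvQ : θ v ∈ Qset A := nvs_Q_smul h hvQ hθ hθ0
    have hθv0 : θ v ≠ 0 := nvs_smul_ne_zero h hv0 hθ hθ0
    have key := H α hα β hβ θ hθ
    symm
    apply nvAdd_unique h hθvQ hθv0 hα hβ (nvAdd_spec hvQ hα hβ).1
    have h1 : nvAdd A v α β (θ v) = nvAdd A v (α ∘ θ) (β ∘ θ) v := congrFun key v
    rw [h1, (nvAdd_spec hvQ (nvs_comp_mem h hα hθ) (nvs_comp_mem h hβ hθ)).2]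
    rfl
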